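/- arXiv:math/0702177 — 2 statements merged into one kernel-verified Lean document; each statement's English description precedes it below -/
import Mathlib

section
/- Let (W,S) be a Coxeter system with distinguished generator s_0. For every w ∈ W, ν(s_0 w) = ν(w) = ν(w s_0) = ℓ_{R∪R^{-1}}(τ(w)), where τ(w) is the unique element of {w, w s_0} in W^+. -/
open CoxeterSystem

namespace AltCox

variable {W : Type*} [Group W]

/-- Word length of `w` with respect to a generating set `A`:
the minimum length of a word in `A` whose product is `w`. -/
noncomputable def glen (A : Set W) (w : W) : ℕ :=
  sInf {k | ∃ l : List W, (∀ x ∈ l, x ∈ A) ∧ l.prod = w ∧ l.length = k}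

variable {n : ℕ} {M : CoxeterMatrix (Fin (n + 1))} (cs : CoxeterSystem M W)

/-- The alternating subgroup `W⁺`: the kernel of the sign character, i.e. the
set of elements of even Coxeter length. -/
def alt : Subgroup W where
  carrier := {w | Even (cs.length w)}
  one_mem' := by simp [Nat.even_iff]
  mul_mem' := by
    intro a b ha hb
    simp only [Set.mem_setOf_eq, Nat.even_iff] at *
    have := cs.length_mul_mod_two a b
    omega
  inv_mem' := by
    intro a ha
    simpa [cs.length_inv] using ha

/-- The generating set `R = {r_i = s₀ sᵢ : i ≠ 0}` of `W⁺`. -/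
def Rset : Set W := {x | ∃ i : Fin (n + 1), i ≠ 0 ∧ x = cs.simple 0 * cs.simple i}

/-- The symmetrized generating set `R ∪ R⁻¹`. -/
def Rsym : Set W := Rset cs ∪ (Rset cs)⁻¹

/-- `ν w`: the minimum number of letters different from `s₀` among all words
in the simple reflections whose product is `w`. -/
noncomputable def nu (w : W) : ℕ :=
  sInf {k | ∃ ω : List (Fin (n + 1)), cs.wordProd ω = w ∧
    (ω.filter (fun i => i ≠ 0)).length = k}

/-- `τ w` is the unique element of `{w, w s₀}` lying in `W⁺`. -/
noncomputable def tau (w : W) : W :=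
  if Even (cs.length w) then w else w * cs.simple 0

/-- `s₀` is evenly laced: `m₀ᵢ` is even or infinite (encoded by `0`) for all `i ≠ 0`. -/
def EvenlyLaced (M : CoxeterMatrix (Fin (n + 1))) : Prop :=
  ∀ i : Fin (n + 1), i ≠ 0 → Even (M 0 i)

/-- The set of all reflections of `(W, S)`. -/
def Tall : Set W := {t | cs.IsReflection t}

/-- The set `T̂` of reflections conjugate to some simple reflection other than `s₀`. -/
def That : Set W := {t | ∃ w : W, ∃ i : Fin (n + 1), i ≠ 0 ∧ t = w * cs.simple i * w⁻¹}

/-- The set of odd palindromes of `W⁺` with respect to `R`. -/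
def Palin : Set W :=
  {p | ∃ l : List W, (∀ x ∈ l, x ∈ Rsym cs) ∧ Odd l.length ∧ l.reverse = l ∧ l.prod = p}

/-- The set of left-shortening palindromes of `w`. -/
noncomputable def PL (w : W) : Set W :=
  {p ∈ Palin cs | glen (Rsym cs) (p * w) < glen (Rsym cs) w}

/-- The set of right-shortening palindromes of `w`. -/
noncomputable def PR (w : W) : Set W :=
  {p ∈ Palin cs | glen (Rsym cs) (w * p) < glen (Rsym cs) w}

/-- The right weak order on `(W⁺, R)`. -/
noncomputable def rweak (u w : W) : Prop :=
  Relation.ReflTransGen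
    (fun a b => ∃ r ∈ Rsym cs, b = a * r ∧
      glen (Rsym cs) b = glen (Rsym cs) a + 1) u w

/-- The left weak order on `(W⁺, R)`. -/
noncomputable def lweak (u w : W) : Prop :=
  Relation.ReflTransGen
    (fun a b => ∃ r ∈ Rsym cs, b = r * a ∧
      glen (Rsym cs) b = glen (Rsym cs) a + 1) u w

/-- The right strong order on `(W⁺, R)`. -/
noncomputable def rstrong (u w : W) : Prop :=
  Relation.ReflTransGen
    (fun a b => ∃ p ∈ Palin cs, b = a * p ∧
      glen (Rsym cs) a < glen (Rsym cs) b) u w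

/-- The left strong order on `(W⁺, R)`. -/
noncomputable def lstrong (u w : W) : Prop :=
  Relation.ReflTransGen
    (fun a b => ∃ p ∈ Palin cs, b = p * a ∧
      glen (Rsym cs) a < glen (Rsym cs) b) u w

/-- The strong Bruhat order on a Coxeter system. -/
noncomputable def bruhatLE {B : Type*} {M' : CoxeterMatrix B} {W' : Type*} [Group W']
    (cs' : CoxeterSystem M' W') (u w : W') : Prop :=
  Relation.ReflTransGen
    (fun a b => ∃ t, cs'.IsReflection t ∧ b = a * t ∧ cs'.length a < cs'.length b) u w

/-- The right weak order of a Coxeter system. -/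
noncomputable def coxRweak {B : Type*} {M' : CoxeterMatrix B} {W' : Type*} [Group W']
    (cs' : CoxeterSystem M' W') (u w : W') : Prop :=
  Relation.ReflTransGen
    (fun a b => ∃ i, b = a * cs'.simple i ∧ cs'.length b = cs'.length a + 1) u w

/-- The standard parabolic subgroup `W_J` for `J ⊆ S`. -/
def parabolic (J : Set (Fin (n + 1))) : Subgroup W :=
  Subgroup.closure (cs.simple '' J)

/-- The image `τ(J) = {s₀ sᵢ : sᵢ ∈ J, i ≠ 0}` of a subset `J ⊆ S` containing `s₀`. -/
def tauSet (J : Set (Fin (n + 1))) : Set W :=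
  {x | ∃ i ∈ J, i ≠ 0 ∧ x = cs.simple 0 * cs.simple i}

/-- The set `W^J` of minimum-length coset representatives for `W/W_J`. -/
def minReps (J : Set (Fin (n + 1))) : Set W :=
  {w | ∀ i ∈ J, cs.length w < cs.length (w * cs.simple i)}


/-
Each generator of `R ∪ R⁻¹` is a word `s₀ sᵢ` or `sᵢ s₀` with exactly one letter other than `s₀`,
so `ν ≤ ℓ_{R ∪ R⁻¹}` on `W⁺`. Conversely, reading a word in `S` from the right and pairing each
letter `sᵢ ≠ s₀` with an adjacent `s₀` (inserting `s₀ s₀` if necessary) rewrites it, up to a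
leftover `s₀` on the left, as a word in `R ∪ R⁻¹` with one letter per `sᵢ ≠ s₀`. On `W⁺` the
leftover `s₀` cannot occur, since `s₀ ∉ W⁺`. Finally `ν` is unchanged by multiplication with `s₀`
on either side, which reduces the general case to `τ(w) ∈ W⁺`.
-/

section WordLength

variable {A : Set W}

theorem glen_le_length {l : List W} (hl : ∀ x ∈ l, x ∈ A) : glen A l.prod ≤ l.length :=
  Nat.sInf_le ⟨l, hl, rfl, rfl⟩

theorem exists_prod_eq_length_eq_glen {w : W}
    (h : ∃ l : List W, (∀ x ∈ l, x ∈ A) ∧ l.prod = w) :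
    ∃ l : List W, (∀ x ∈ l, x ∈ A) ∧ l.prod = w ∧ l.length = glen A w := by
  obtain ⟨l, hl, hw⟩ := h
  exact Nat.sInf_mem (s := {k | ∃ l : List W, (∀ x ∈ l, x ∈ A) ∧ l.prod = w ∧ l.length = k})
    ⟨_, l, hl, hw, rfl⟩

end WordLength

theorem mem_alt_iff {w : W} : w ∈ alt cs ↔ Even (cs.length w) := Iff.rfl

theorem simple_notMem_alt (i : Fin (n + 1)) : cs.simple i ∉ alt cs := by
  simp [mem_alt_iff, cs.length_simple]

theorem mul_simple_mem_alt_iff (w : W) (i : Fin (n + 1)) :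
    w * cs.simple i ∈ alt cs ↔ w ∉ alt cs := by
  have := cs.length_mul_mod_two w (cs.simple i)
  rw [cs.length_simple] at this
  simp only [mem_alt_iff, Nat.even_iff]
  omega

theorem mem_alt_of_mem_Rsym {x : W} (hx : x ∈ Rsym cs) : x ∈ alt cs := by
  have hR {y : W} (hy : y ∈ Rset cs) : y ∈ alt cs := by
    obtain ⟨i, -, rfl⟩ := hy
    exact (mul_simple_mem_alt_iff cs _ i).mpr (simple_notMem_alt cs 0)
  rcases hx with hx | hx
  · exact hR hx
  · simpa using (alt cs).inv_mem (hR hx)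

theorem nu_le_length_filter {w : W} {ω : List (Fin (n + 1))} (hω : cs.wordProd ω = w) :
    nu cs w ≤ (ω.filter (fun i => i ≠ 0)).length :=
  Nat.sInf_le ⟨ω, hω, rfl⟩

theorem exists_wordProd_eq_length_filter_eq_nu (w : W) :
    ∃ ω : List (Fin (n + 1)), cs.wordProd ω = w ∧ (ω.filter (fun i => i ≠ 0)).length = nu cs w := by
  obtain ⟨ω, hω⟩ := cs.wordProd_surjective w
  exact Nat.sInf_mem (s := {k | ∃ ω : List (Fin (n + 1)), cs.wordProd ω = w ∧
    (ω.filter (fun i => i ≠ 0)).length = k}) ⟨_, ω, hω, rfl⟩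

theorem nu_simple_zero_mul_le (w : W) : nu cs (cs.simple 0 * w) ≤ nu cs w := by
  obtain ⟨ω, hω, hν⟩ := exists_wordProd_eq_length_filter_eq_nu cs w
  calc nu cs (cs.simple 0 * w) ≤ ((0 :: ω).filter (fun i => i ≠ 0)).length :=
        nu_le_length_filter cs (by rw [cs.wordProd_cons, hω])
    _ = nu cs w := by simpa using hν

theorem nu_mul_simple_zero_le (w : W) : nu cs (w * cs.simple 0) ≤ nu cs w := by
  obtain ⟨ω, hω, hν⟩ := exists_wordProd_eq_length_filter_eq_nu cs w
  calc nu cs (w * cs.simple 0) ≤ ((ω ++ [0]).filter (fun i => i ≠ 0)).length :=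
        nu_le_length_filter cs (by rw [cs.wordProd_append, hω, cs.wordProd_singleton])
    _ = nu cs w := by simpa using hν

theorem nu_simple_zero_mul (w : W) : nu cs (cs.simple 0 * w) = nu cs w := by
  refine le_antisymm (nu_simple_zero_mul_le cs w) ?_
  simpa using nu_simple_zero_mul_le cs (cs.simple 0 * w)

theorem nu_mul_simple_zero (w : W) : nu cs (w * cs.simple 0) = nu cs w := by
  refine le_antisymm (nu_mul_simple_zero_le cs w) ?_
  simpa using nu_mul_simple_zero_le cs (w * cs.simple 0)

theorem exists_wordProd_eq_of_mem_Rsym {x : W} (hx : x ∈ Rsym cs) :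
    ∃ ω : List (Fin (n + 1)), cs.wordProd ω = x ∧ (ω.filter (fun i => i ≠ 0)).length = 1 := by
  rcases hx with ⟨i, hi, rfl⟩ | ⟨i, hi, hx⟩
  · exact ⟨[0, i], by simp [wordProd], by simp [hi]⟩
  · refine ⟨[i, 0], ?_, by simp [hi]⟩
    rw [← inv_inv x, hx]
    simp [wordProd]

theorem exists_wordProd_eq_prod_of_forall_mem_Rsym {l : List W} (hl : ∀ x ∈ l, x ∈ Rsym cs) :
    ∃ ω : List (Fin (n + 1)), cs.wordProd ω = l.prod ∧
      (ω.filter (fun i => i ≠ 0)).length = l.length := by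
  induction l with
  | nil => exact ⟨[], by simp, by simp⟩
  | cons x l ih =>
    obtain ⟨ωx, hωx, hx⟩ := exists_wordProd_eq_of_mem_Rsym cs (hl x List.mem_cons_self)
    obtain ⟨ω, hω, hl'⟩ := ih fun y hy => hl y (List.mem_cons_of_mem x hy)
    refine ⟨ωx ++ ω, by rw [cs.wordProd_append, hωx, hω, List.prod_cons], ?_⟩
    rw [List.filter_append, List.length_append, hx, hl', List.length_cons, add_comm]

theorem exists_Rsym_word_of_wordProd (ω : List (Fin (n + 1))) :
    ∃ l : List W, (∀ x ∈ l, x ∈ Rsym cs) ∧ l.length = (ω.filter (fun i => i ≠ 0)).length ∧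
      (l.prod = cs.wordProd ω ∨ l.prod = cs.simple 0 * cs.wordProd ω) := by
  induction ω with
  | nil => exact ⟨[], by simp, by simp, by simp⟩
  | cons j ω ih =>
    obtain ⟨l, hl, hlen, hprod⟩ := ih
    rw [cs.wordProd_cons]
    by_cases hj : j = 0
    · subst hj
      refine ⟨l, hl, by simpa using hlen, ?_⟩
      rcases hprod with h | h
      · exact Or.inr (by simp [h])
      · exact Or.inl h
    have hr : cs.simple 0 * cs.simple j ∈ Rsym cs := Or.inl ⟨j, hj, rfl⟩
    have hr' : cs.simple j * cs.simple 0 ∈ Rsym cs := Or.inr ⟨j, hj, by simp⟩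
    rcases hprod with h | h
    · refine ⟨(cs.simple 0 * cs.simple j) :: l, ?_, by simp [hj, hlen], ?_⟩
      · simpa using ⟨hr, hl⟩
      · exact Or.inr (by simp [h, mul_assoc])
    · refine ⟨(cs.simple j * cs.simple 0) :: l, ?_, by simp [hj, hlen], ?_⟩
      · simpa using ⟨hr', hl⟩
      · exact Or.inl (by simp [h, mul_assoc])

theorem glen_Rsym_eq_nu {u : W} (hu : u ∈ alt cs) : glen (Rsym cs) u = nu cs u := by
  obtain ⟨ω, hω, hν⟩ := exists_wordProd_eq_length_filter_eq_nu cs u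
  obtain ⟨l, hl, hlen, hprod⟩ := exists_Rsym_word_of_wordProd cs ω
  have hlu : l.prod = u := by
    rcases hprod with h | h
    · rw [h, hω]
    · have hs : cs.simple 0 * u ∈ alt cs := by
        rw [← hω, ← h]
        exact (alt cs).list_prod_mem fun x hx => mem_alt_of_mem_Rsym cs (hl x hx)
      exact absurd (by simpa using (alt cs).mul_mem hs ((alt cs).inv_mem hu))
        (simple_notMem_alt cs 0)
  refine le_antisymm ?_ ?_
  · calc glen (Rsym cs) u ≤ l.length := hlu ▸ glen_le_length hl
      _ = nu cs u := by rw [hlen, hν]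
  · obtain ⟨l', hl', hl'u, hl'len⟩ := exists_prod_eq_length_eq_glen ⟨l, hl, hlu⟩
    obtain ⟨ω', hω', hω'len⟩ := exists_wordProd_eq_prod_of_forall_mem_Rsym cs hl'
    calc nu cs u ≤ (ω'.filter (fun i => i ≠ 0)).length := nu_le_length_filter cs (hω'.trans hl'u)
      _ = glen (Rsym cs) u := by rw [hω'len, hl'len]

theorem tau_mem_alt (w : W) : tau cs w ∈ alt cs := by
  unfold tau
  split_ifs with hw
  · exact hw
  · exact (mul_simple_mem_alt_iff cs w 0).mpr hw

theorem nu_tau (w : W) : nu cs (tau cs w) = nu cs w := by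
  unfold tau
  split_ifs
  · rfl
  · exact nu_mul_simple_zero cs w

/-- For every `w ∈ W`: `ν(s₀ w) = ν(w) = ν(w s₀) = ℓ_{R ∪ R⁻¹}(τ(w))`. -/
theorem statement5 (w : W) :
    nu cs (cs.simple 0 * w) = nu cs w ∧
    nu cs (w * cs.simple 0) = nu cs w ∧
    glen (Rsym cs) (tau cs w) = nu cs w :=
  ⟨nu_simple_zero_mul cs w, nu_mul_simple_zero cs w,
    (glen_Rsym_eq_nu cs (tau_mem_alt cs w)).trans (nu_tau cs w)⟩

end AltCox
end

section
/- Let (W,S) be a Coxeter system with distinguished generator s_0, and let P(W^+) be the set of odd palindromes in W^+ with respect to R = {r_i = s_0 s_i}. Then P(W^+)·s_0 = T̂ = s_0·P(W^+); that is, w ∈ W^+ is a palindrome if and only if w s_0 (equivalently s_0 w) is a reflection conjugate to some s ∈ S \ {s_0}. -/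
open CoxeterSystem

namespace AltCox

variable {W : Type*} [Group W]

variable {n : ℕ} {M : CoxeterMatrix (Fin (n + 1))} (cs : CoxeterSystem M W)

/-
Conjugation by `s₀` inverts every letter of `R ∪ R⁻¹`, so `r s₀ = s₀ r⁻¹`. Hence for an odd
palindrome `p = r q r` one gets `p s₀ = r (q s₀) r⁻¹`, and by induction on `q` every `p s₀` is
conjugate to `r s₀ ∈ {s₀ sᵢ s₀, sᵢ}`. Conversely, writing `w = s_j w'`, the element
`(s_j t s_j) s₀` is `s₀ (t s₀) s₀` if `j = 0` and `(s_j s₀) (s₀ (t s₀) s₀) (s_j s₀)` otherwise;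
both operations preserve odd palindromes, so induction on `w` shows `w sᵢ w⁻¹ s₀ ∈ P(W⁺)`.
-/

lemma mem_Rsym_iff {x : W} :
    x ∈ Rsym cs ↔ ∃ i, i ≠ 0 ∧ (x = cs.simple 0 * cs.simple i ∨ x = cs.simple i * cs.simple 0) := by
  simp only [Rsym, Rset, Set.mem_union, Set.mem_inv, Set.mem_ofPred_eq, inv_eq_iff_eq_inv,
    mul_inv_rev, inv_simple, ← exists_or, ← and_or_left]

lemma inv_mem_Rsym {x : W} (hx : x ∈ Rsym cs) : x⁻¹ ∈ Rsym cs := by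
  rcases hx with hx | hx
  · exact Or.inr (by rwa [Set.mem_inv, inv_inv])
  · exact Or.inl hx

lemma simple_zero_mul_mul_simple_zero_of_mem_Rsym {x : W} (hx : x ∈ Rsym cs) :
    cs.simple 0 * x * cs.simple 0 = x⁻¹ := by
  obtain ⟨i, -, rfl | rfl⟩ := (mem_Rsym_iff cs).mp hx <;> simp [mul_assoc]

lemma mem_Palin_of_mem_Rsym {r : W} (hr : r ∈ Rsym cs) : r ∈ Palin cs :=
  ⟨[r], by simpa using hr, by simp, rfl, by simp⟩

lemma mul_mul_mem_Palin {r p : W} (hr : r ∈ Rsym cs) (hp : p ∈ Palin cs) :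
    r * p * r ∈ Palin cs := by
  obtain ⟨l, hl, hodd, hrev, rfl⟩ := hp
  refine ⟨r :: (l ++ [r]), ?_, by simpa [Nat.odd_add_one] using hodd, by simp [hrev], by
    simp [mul_assoc]⟩
  intro x hx
  simp only [List.mem_cons, List.mem_append, List.not_mem_nil, or_false] at hx
  rcases hx with rfl | hx | rfl
  exacts [hr, hl x hx, hr]

variable {cs} in
@[elab_as_elim]
lemma Palin.induction {C : W → Prop} (base : ∀ r ∈ Rsym cs, C r)
    (step : ∀ r ∈ Rsym cs, ∀ p, C p → C (r * p * r)) {p : W} (hp : p ∈ Palin cs) : C p := by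
  obtain ⟨l, hl, hodd, hrev, rfl⟩ := hp
  induction List.Palindrome.of_reverse_eq hrev with
  | nil => simp at hodd
  | singleton r => simpa using base r (hl r (by simp))
  | cons_concat r hpal ih =>
    have hr : r ∈ Rsym cs := hl r (by simp)
    simpa [mul_assoc] using step r hr _ (ih (fun x hx => hl x (by simp [hx]))
      (by simpa [Nat.odd_add_one] using hodd) hpal.reverse_eq)

lemma simple_zero_mul_mul_simple_zero_mem_Palin {p : W} (hp : p ∈ Palin cs) :
    cs.simple 0 * p * cs.simple 0 ∈ Palin cs := by
  refine Palin.induction (fun r hr => ?_) (fun r hr p ih => ?_) hp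
  · rw [simple_zero_mul_mul_simple_zero_of_mem_Rsym cs hr]
    exact mem_Palin_of_mem_Rsym cs (inv_mem_Rsym cs hr)
  · have hconj : cs.simple 0 * (r * p * r) * cs.simple 0 =
        (cs.simple 0 * r * cs.simple 0) * (cs.simple 0 * p * cs.simple 0) *
          (cs.simple 0 * r * cs.simple 0) := by
      simp [mul_assoc]
    rw [hconj, simple_zero_mul_mul_simple_zero_of_mem_Rsym cs hr]
    exact mul_mul_mem_Palin cs (inv_mem_Rsym cs hr) ih

lemma conj_mem_That {t : W} (ht : t ∈ That cs) (g : W) : g * t * g⁻¹ ∈ That cs := by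
  obtain ⟨w, i, hi, rfl⟩ := ht
  exact ⟨g * w, i, hi, by group⟩

lemma simple_zero_mul_mem_That_iff (w : W) :
    cs.simple 0 * w ∈ That cs ↔ w * cs.simple 0 ∈ That cs := by
  constructor <;> intro h <;> simpa [mul_assoc] using conj_mem_That cs h (cs.simple 0)

lemma mul_simple_zero_mem_That {p : W} (hp : p ∈ Palin cs) : p * cs.simple 0 ∈ That cs := by
  refine Palin.induction (fun r hr => ?_) (fun r hr p ih => ?_) hp
  · obtain ⟨i, hi, rfl | rfl⟩ := (mem_Rsym_iff cs).mp hr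
    · exact ⟨cs.simple 0, i, hi, by simp⟩
    · exact ⟨1, i, hi, by simp [mul_assoc]⟩
  · have hr0 : r * cs.simple 0 = cs.simple 0 * r⁻¹ := by
      rw [← simple_zero_mul_mul_simple_zero_of_mem_Rsym cs hr]
      simp [mul_assoc]
    rw [mul_assoc, hr0, ← mul_assoc, mul_assoc r]
    exact conj_mem_That cs ih r

lemma simple_mul_mul_simple_mul_simple_zero_mem_Palin {t : W} (ht : t * cs.simple 0 ∈ Palin cs)
    (j : Fin (n + 1)) : cs.simple j * t * cs.simple j * cs.simple 0 ∈ Palin cs := by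
  have hconj := simple_zero_mul_mul_simple_zero_mem_Palin cs ht
  by_cases hj : j = 0
  · subst hj
    simpa [mul_assoc] using hconj
  · have hr : cs.simple j * cs.simple 0 ∈ Rsym cs := (mem_Rsym_iff cs).mpr ⟨j, hj, Or.inr rfl⟩
    simpa [mul_assoc] using mul_mul_mem_Palin cs hr hconj

lemma mul_simple_zero_mem_Palin {t : W} (ht : t ∈ That cs) : t * cs.simple 0 ∈ Palin cs := by
  obtain ⟨w, i, hi, rfl⟩ := ht
  induction w using cs.simple_induction_left with
  | one => simpa using mem_Palin_of_mem_Rsym cs ((mem_Rsym_iff cs).mpr ⟨i, hi, Or.inr rfl⟩)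
  | mul_simple_left w j ih =>
    simpa [mul_assoc] using simple_mul_mul_simple_mul_simple_zero_mem_Palin cs ih j

lemma mem_Palin_iff_mul_simple_zero_mem_That (p : W) :
    p ∈ Palin cs ↔ p * cs.simple 0 ∈ That cs :=
  ⟨mul_simple_zero_mem_That cs, fun h => by simpa using mul_simple_zero_mem_Palin cs h⟩

/-- `P(W⁺) s₀ = T̂ = s₀ P(W⁺)`: an element `w ∈ W⁺` is an odd palindrome with
respect to `R` if and only if `w s₀` (equivalently `s₀ w`) is a reflection
conjugate to some simple reflection other than `s₀`. -/
theorem statement9 :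
    ((fun p => p * cs.simple 0) '' Palin cs = That cs) ∧
    ((fun p => cs.simple 0 * p) '' Palin cs = That cs) ∧
    (∀ w ∈ alt cs, (w ∈ Palin cs ↔ w * cs.simple 0 ∈ That cs)) ∧
    (∀ w ∈ alt cs, (w ∈ Palin cs ↔ cs.simple 0 * w ∈ That cs)) := by
  have right := mem_Palin_iff_mul_simple_zero_mem_That cs
  have left (p : W) : p ∈ Palin cs ↔ cs.simple 0 * p ∈ That cs := by
    rw [simple_zero_mul_mem_That_iff, right]
  refine ⟨?_, ?_, fun w _ => right w, fun w _ => left w⟩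
  · ext t
    simp [Set.image_mul_right, right]
  · ext t
    simp [Set.image_mul_left, left]

end AltCox
end
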